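/- arXiv:2301.06274 — 8 statements merged into one kernel-verified Lean document; each statement's English description precedes it below -/
import Mathlib

section
/- Let A be a left brace. Then for all elements a, b, c ∈ A one has (a + b) ⋆ c = a ⋆ (λ_{a⁻¹}(b) ⋆ c) + λ_{a⁻¹}(b) ⋆ c + a ⋆ c, where a⁻¹ denotes the multiplicative inverse of a. -/
/-- A left brace: `(A, +)` is an abelian group, `(A, *)` is a group, and
`a * (b + c) = a * b + a * c - a` for all `a b c`. -/
class LeftBrace (A : Type*) extends AddCommGroup A, Group A where
  mul_add_eq : ∀ a b c : A, a * (b + c) = a * b + a * c - a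

namespace LeftBrace

variable {A : Type*} [LeftBrace A]

/-- The star operation of a left brace: `a ⋆ b = a * b - a - b`. -/
def star (a b : A) : A := a * b - a - b

/-- The map `λ_a : A → A`, `λ_a (x) = a * x - a`. -/
def lambdaMap (a x : A) : A := a * x - a

end LeftBrace

open LeftBrace

section Aux

variable {A : Type*} [LeftBrace A]

lemma lb_one_eq_zero : (1 : A) = 0 := by
  have h := LeftBrace.mul_add_eq (1 : A) 0 0
  simp only [one_mul, add_zero] at h
  -- h : (0 : A) = 0 + 0 - 1
  have : (-1 : A) = 0 := by rw [← h.symm]; abel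
  exact neg_eq_zero.mp this

lemma lb_mul_zero (a : A) : a * 0 = a := by
  rw [← lb_one_eq_zero, mul_one]

lemma lb_mul_neg (a x : A) : a * (-x) = a + a - a * x := by
  have h := LeftBrace.mul_add_eq a x (-x)
  rw [add_neg_cancel, lb_mul_zero] at h
  -- h : a = a * x + a * (-x) - a
  have h2 : a * x + a * (-x) = a + a := (eq_sub_iff_add_eq.mp h).symm
  have h3 : a * (-x) + a * x = a + a := by rw [add_comm]; exact h2
  exact eq_sub_of_add_eq h3

end Aux

/-- In a left brace `A`,
`(a + b) ⋆ c = a ⋆ (λ_{a⁻¹}(b) ⋆ c) + λ_{a⁻¹}(b) ⋆ c + a ⋆ c` for all `a b c ∈ A`. -/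
theorem add_star {A : Type*} [LeftBrace A] (a b c : A) :
    star (a + b) c =
      star a (star (lambdaMap a⁻¹ b) c) + star (lambdaMap a⁻¹ b) c + star a c := by
  simp only [LeftBrace.star, LeftBrace.lambdaMap]
  set u : A := a⁻¹ * b - a⁻¹ with hu
  have hau : a * u = a + b := by
    rw [hu, sub_eq_add_neg, LeftBrace.mul_add_eq, lb_mul_neg, ← mul_assoc,
      mul_inv_cancel, one_mul, lb_one_eq_zero]
    abel
  have hA : a * (u * c - u - c)
      = (a + b) * c + (a + a - (a + b)) + (a + a - a * c) - a - a := by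
    rw [sub_eq_add_neg _ c, LeftBrace.mul_add_eq, sub_eq_add_neg _ u,
      LeftBrace.mul_add_eq, lb_mul_neg, lb_mul_neg, ← mul_assoc, hau]
    abel
  rw [hA]
  abel
end

section
/- Let A be a left brace. Then for all elements a, b, y ∈ A one has λ_y(b ⋆ a) = (y·b·y⁻¹) ⋆ λ_y(a), where y⁻¹ denotes the multiplicative inverse of y. -/
open LeftBrace

lemma LeftBrace.mul_sub_eq {A : Type*} [LeftBrace A] (a b c : A) :
    a * (b - c) = a * b - a * c + a := by
  have h := LeftBrace.mul_add_eq a (b - c) c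
  rw [sub_add_cancel] at h
  rw [h]; abel

/-- In a left brace `A`,
`λ_y(b ⋆ a) = (y·b·y⁻¹) ⋆ λ_y(a)` for all `a b y ∈ A`. -/
theorem lambdaMap_star {A : Type*} [LeftBrace A] (a b y : A) :
    lambdaMap y (star b a) = star (y * b * y⁻¹) (lambdaMap y a) := by
  unfold lambdaMap LeftBrace.star
  rw [LeftBrace.mul_sub_eq, LeftBrace.mul_sub_eq, LeftBrace.mul_sub_eq]
  have h1 : y * b * y⁻¹ * (y * a) = y * (b * a) := by
    group
  have h2 : y * b * y⁻¹ * y = y * b := by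
    group
  rw [h1, h2, ← mul_assoc]
  abel
end

section
/- Let A be a left brace. Then for every ordinal α the term A^α of the left series is a left ideal of A, and the term A^{(α)} of the right series is an ideal of A. -/
namespace LeftBrace

variable {A : Type*} [LeftBrace A]

/-- `K ⋆ L`: the subgroup of the additive group of `A` generated by all
`x ⋆ y` with `x ∈ K`, `y ∈ L`. -/
def setStar (K L : Set A) : AddSubgroup A :=
  AddSubgroup.closure (Set.image2 star K L)

/-- A subbrace of `A`: a subset that is simultaneously a subgroup of the
additive group of `A` and a subgroup of the multiplicative group of `A`. -/
def IsSubbrace (S : Set A) : Prop :=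
  (0 : A) ∈ S ∧ (∀ x ∈ S, ∀ y ∈ S, x + y ∈ S) ∧ (∀ x ∈ S, -x ∈ S) ∧
    (1 : A) ∈ S ∧ (∀ x ∈ S, ∀ y ∈ S, x * y ∈ S) ∧ (∀ x ∈ S, x⁻¹ ∈ S)

/-- A left ideal of `A`: a subbrace `S` with `a ⋆ b ∈ S` for all `a ∈ A`, `b ∈ S`. -/
def IsLeftIdeal (S : Set A) : Prop :=
  IsSubbrace S ∧ ∀ a : A, ∀ b ∈ S, star a b ∈ S

/-- An ideal of `A`: a subbrace `S` with `a ⋆ z ∈ S` and `z ⋆ a ∈ S`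
for all `a ∈ A`, `z ∈ S`. -/
def IsIdeal (S : Set A) : Prop :=
  IsSubbrace S ∧ ∀ a : A, ∀ z ∈ S, star a z ∈ S ∧ star z a ∈ S

/-- The left series of the brace `A`, with the indexing shifted by one:
`leftSeriesN A 0 = A¹ = A` and `leftSeriesN A n = Aⁿ⁺¹ = A ⋆ Aⁿ`.
In particular `leftSeriesN A 1 = A²` and `leftSeriesN A 2 = A³`. -/
def leftSeriesN (A : Type*) [LeftBrace A] : ℕ → AddSubgroup A
  | 0 => ⊤
  | n + 1 => setStar Set.univ ((leftSeriesN A n : AddSubgroup A) : Set A)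

/-- The right series of the brace `A`, with the indexing shifted by one:
`rightSeriesN A 0 = A⁽¹⁾ = A` and `rightSeriesN A n = A⁽ⁿ⁺¹⁾ = A⁽ⁿ⁾ ⋆ A`.
In particular `rightSeriesN A 2 = A⁽³⁾` and `rightSeriesN A 3 = A⁽⁴⁾`. -/
def rightSeriesN (A : Type*) [LeftBrace A] : ℕ → AddSubgroup A
  | 0 => ⊤
  | n + 1 => setStar ((rightSeriesN A n : AddSubgroup A) : Set A) Set.univ

end LeftBrace

open LeftBrace

namespace LeftBrace

/-- The left series of `A` indexed by ordinals, with the indexing shifted by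
one: `leftSeriesOrd A 0 = A¹ = A`, `leftSeriesOrd A (α + 1) = A ⋆ leftSeriesOrd A α`,
and at limit ordinals it is the intersection of the earlier terms. -/
noncomputable def leftSeriesOrd (A : Type*) [LeftBrace A] (o : Ordinal) :
    AddSubgroup A :=
  Ordinal.limitRecOn o ⊤
    (fun _ ih => setStar (Set.univ : Set A) (ih : Set A))
    (fun o _ ih => ⨅ (μ : Ordinal) (h : μ < o), ih μ h)

/-- The right series of `A` indexed by ordinals, with the indexing shifted by
one: `rightSeriesOrd A 0 = A⁽¹⁾ = A`, `rightSeriesOrd A (α + 1) = (rightSeriesOrd A α) ⋆ A`,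
and at limit ordinals it is the intersection of the earlier terms. -/
noncomputable def rightSeriesOrd (A : Type*) [LeftBrace A] (o : Ordinal) :
    AddSubgroup A :=
  Ordinal.limitRecOn o ⊤
    (fun _ ih => setStar (ih : Set A) (Set.univ : Set A))
    (fun o _ ih => ⨅ (μ : Ordinal) (h : μ < o), ih μ h)

end LeftBrace

/-!
Write `λ_a b = a * b - a`. Each `λ_a` is additive, `λ_{ab} = λ_a ∘ λ_b`, and
`a ⋆ b = λ_a b - b`, so the left ideals are exactly the `λ`-invariant additive subgroups.
The identity `λ_a (x ⋆ y) = (a x a⁻¹) ⋆ λ_a y` makes `K ⋆ L` `λ`-invariant whenever `K` is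
closed under conjugation and `L` is `λ`-invariant. A `λ`-invariant `I` with `I ⋆ A ⊆ I` is
closed under conjugation, since `a⁻¹ z a = λ_{a⁻¹} (z a - a)` and `z a - a = z ⋆ a + z`.
Transfinite induction then carries `λ`-invariance along the left series, and `λ`-invariance
together with `A⁽ᵅ⁾ ⋆ A ⊆ A⁽ᵅ⁾` along the right series; both properties pass to intersections.
-/

namespace LeftBrace

variable {A : Type*} [LeftBrace A]

def lam (a : A) : A →+ A :=
  AddMonoidHom.mk' (fun b => a * b - a) fun b c => by
    simp only [mul_add_eq]
    abel

theorem lam_apply (a b : A) : lam a b = a * b - a := rfl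

theorem one_eq_zero : (1 : A) = 0 := by
  have h : (1 : A) * 0 - 1 = 0 := (lam 1).map_zero
  rwa [one_mul, sub_eq_zero, eq_comm] at h

theorem lam_one (b : A) : lam 1 b = b := by
  rw [lam_apply, one_mul, one_eq_zero, sub_zero]

theorem lam_mul (a b c : A) : lam (a * b) c = lam a (lam b c) := by
  have h := mul_add_eq a (b * c - b) b
  rw [sub_add_cancel] at h
  rw [lam_apply, lam_apply, lam_apply, mul_assoc, h]
  abel

theorem star_eq_lam_sub (a b : A) : star a b = lam a b - b := rfl

theorem lam_star (a x y : A) : lam a (star x y) = star (a * x * a⁻¹) (lam a y) := by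
  rw [star_eq_lam_sub, star_eq_lam_sub, map_sub, ← lam_mul, ← lam_mul, inv_mul_cancel_right]

theorem inv_mul_mul_eq_lam (a z : A) : a⁻¹ * z * a = lam a⁻¹ (z * a - a) := by
  have h : a * lam a⁻¹ (z * a - a) - a = z * a - a := by
    rw [← lam_apply, ← lam_mul, mul_inv_cancel, lam_one]
  rw [sub_left_inj] at h
  rw [mul_assoc]
  exact (eq_inv_mul_iff_mul_eq.mpr h).symm

theorem star_mem_setStar {K L : Set A} {x y : A} (hx : x ∈ K) (hy : y ∈ L) :
    star x y ∈ setStar K L :=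
  AddSubgroup.subset_closure (Set.mem_image2_of_mem hx hy)

theorem setStar_mono {K K' L L' : Set A} (hK : K ⊆ K') (hL : L ⊆ L') :
    setStar K L ≤ setStar K' L' :=
  AddSubgroup.closure_mono (Set.image2_subset hK hL)

def IsLamInvariant (S : AddSubgroup A) : Prop :=
  ∀ a, ∀ b ∈ S, lam a b ∈ S

theorem isLamInvariant_top : IsLamInvariant (⊤ : AddSubgroup A) :=
  fun _ _ _ => AddSubgroup.mem_top _

theorem IsLamInvariant.iInf {ι : Sort*} {S : ι → AddSubgroup A}
    (hS : ∀ i, IsLamInvariant (S i)) : IsLamInvariant (⨅ i, S i) := by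
  intro a b hb
  rw [AddSubgroup.mem_iInf] at hb ⊢
  exact fun i => hS i a b (hb i)

theorem IsLamInvariant.star_mem {S : AddSubgroup A} (hS : IsLamInvariant S) (a : A) {b : A}
    (hb : b ∈ S) : star a b ∈ S :=
  S.sub_mem (hS a b hb) hb

theorem IsLamInvariant.isLeftIdeal {S : AddSubgroup A} (hS : IsLamInvariant S) :
    IsLeftIdeal (S : Set A) := by
  refine ⟨⟨S.zero_mem, fun _ hx _ hy => S.add_mem hx hy, fun _ hx => S.neg_mem hx,
    one_eq_zero (A := A) ▸ S.zero_mem, fun x hx y hy => ?_, fun x hx => ?_⟩,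
    fun a _ hb => hS.star_mem a hb⟩
  · have h : x * y = lam x y + x := (sub_add_cancel _ _).symm
    exact h ▸ S.add_mem (hS x y hy) hx
  · have h : x⁻¹ = -lam x⁻¹ x := by
      rw [lam_apply, inv_mul_cancel, one_eq_zero, zero_sub, neg_neg]
    exact h ▸ S.neg_mem (hS x⁻¹ x hx)

theorem isLamInvariant_setStar {K L : Set A} (hK : ∀ a, ∀ x ∈ K, a * x * a⁻¹ ∈ K)
    (hL : ∀ a, ∀ y ∈ L, lam a y ∈ L) : IsLamInvariant (setStar K L) := by
  intro a b hb
  induction hb using AddSubgroup.closure_induction with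
  | mem _ hx =>
    obtain ⟨x, hx, y, hy, rfl⟩ := hx
    rw [lam_star]
    exact star_mem_setStar (hK a x hx) (hL a y hy)
  | zero => rw [map_zero]; exact AddSubgroup.zero_mem _
  | add _ _ _ _ hx hy => rw [map_add]; exact AddSubgroup.add_mem _ hx hy
  | neg _ _ hx => rw [map_neg]; exact AddSubgroup.neg_mem _ hx

theorem IsLamInvariant.mul_mul_inv_mem {S : AddSubgroup A} (hS : IsLamInvariant S)
    (hSA : setStar (S : Set A) Set.univ ≤ S) (a : A) {z : A} (hz : z ∈ S) :
    a * z * a⁻¹ ∈ S := by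
  have hza : z * a⁻¹ - a⁻¹ ∈ S := by
    have h : z * a⁻¹ - a⁻¹ = star z a⁻¹ + z := by rw [star]; abel
    exact h ▸ S.add_mem (hSA (star_mem_setStar hz (Set.mem_univ _))) hz
  have h := inv_mul_mul_eq_lam a⁻¹ z
  rw [inv_inv] at h
  exact h ▸ hS a _ hza

theorem IsLamInvariant.isIdeal {S : AddSubgroup A} (hS : IsLamInvariant S)
    (hSA : setStar (S : Set A) Set.univ ≤ S) : IsIdeal (S : Set A) :=
  ⟨hS.isLeftIdeal.1, fun a _ hz =>
    ⟨hS.star_mem a hz, hSA (star_mem_setStar hz (Set.mem_univ a))⟩⟩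

theorem leftSeriesOrd_zero : leftSeriesOrd A 0 = ⊤ :=
  Ordinal.limitRecOn_zero _ _ _

theorem leftSeriesOrd_add_one (o : Ordinal) :
    leftSeriesOrd A (o + 1) = setStar Set.univ (leftSeriesOrd A o : Set A) :=
  Ordinal.limitRecOn_add_one _ _ _ _

theorem leftSeriesOrd_limit {o : Ordinal} (ho : Order.IsSuccLimit o) :
    leftSeriesOrd A o = ⨅ (μ : Ordinal) (_ : μ < o), leftSeriesOrd A μ :=
  Ordinal.limitRecOn_limit _ _ _ _ ho

theorem rightSeriesOrd_zero : rightSeriesOrd A 0 = ⊤ :=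
  Ordinal.limitRecOn_zero _ _ _

theorem rightSeriesOrd_add_one (o : Ordinal) :
    rightSeriesOrd A (o + 1) = setStar (rightSeriesOrd A o : Set A) Set.univ :=
  Ordinal.limitRecOn_add_one _ _ _ _

theorem rightSeriesOrd_limit {o : Ordinal} (ho : Order.IsSuccLimit o) :
    rightSeriesOrd A o = ⨅ (μ : Ordinal) (_ : μ < o), rightSeriesOrd A μ :=
  Ordinal.limitRecOn_limit _ _ _ _ ho

theorem isLamInvariant_leftSeriesOrd (o : Ordinal) : IsLamInvariant (leftSeriesOrd A o) := by
  induction o using Ordinal.limitRecOn with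
  | zero => rw [leftSeriesOrd_zero]; exact isLamInvariant_top
  | add_one o ih =>
    rw [leftSeriesOrd_add_one]
    exact isLamInvariant_setStar (fun _ _ _ => Set.mem_univ _) ih
  | limit o ho ih =>
    rw [leftSeriesOrd_limit ho]
    exact IsLamInvariant.iInf fun μ => IsLamInvariant.iInf (ih μ)

theorem setStar_iInf_univ_le {ι : Sort*} {S : ι → AddSubgroup A}
    (hS : ∀ i, setStar (S i : Set A) Set.univ ≤ S i) :
    setStar ((⨅ i, S i : AddSubgroup A) : Set A) Set.univ ≤ ⨅ i, S i :=
  le_iInf fun i =>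
    (setStar_mono (SetLike.coe_subset_coe.mpr (iInf_le S i)) subset_rfl).trans (hS i)

theorem rightSeriesOrd_isLamInvariant_and_setStar_univ_le (o : Ordinal) :
    IsLamInvariant (rightSeriesOrd A o) ∧
      setStar (rightSeriesOrd A o : Set A) Set.univ ≤ rightSeriesOrd A o := by
  induction o using Ordinal.limitRecOn with
  | zero =>
    rw [rightSeriesOrd_zero]
    exact ⟨isLamInvariant_top, le_top⟩
  | add_one o ih =>
    obtain ⟨hlam, hstar⟩ := ih
    rw [rightSeriesOrd_add_one]
    exact ⟨isLamInvariant_setStar (fun a _ hz => hlam.mul_mul_inv_mem hstar a hz)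
      (fun _ _ _ => Set.mem_univ _), setStar_mono hstar subset_rfl⟩
  | limit o ho ih =>
    rw [rightSeriesOrd_limit ho]
    exact ⟨IsLamInvariant.iInf fun μ => IsLamInvariant.iInf fun h => (ih μ h).1,
      setStar_iInf_univ_le fun μ => setStar_iInf_univ_le fun h => (ih μ h).2⟩

end LeftBrace

/-- For every ordinal `α`, the term `A^α` of the left series
of a left brace `A` is a left ideal of `A`, and the term `A^{(α)}` of the
right series is an ideal of `A`. -/
theorem leftSeriesOrd_isLeftIdeal_and_rightSeriesOrd_isIdeal
    {A : Type*} [LeftBrace A] (α : Ordinal) :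
    IsLeftIdeal ((leftSeriesOrd A α : AddSubgroup A) : Set A) ∧
    IsIdeal ((rightSeriesOrd A α : AddSubgroup A) : Set A) := by
  obtain ⟨hlam, hstar⟩ := rightSeriesOrd_isLamInvariant_and_setStar_univ_le (A := A) α
  exact ⟨(isLamInvariant_leftSeriesOrd α).isLeftIdeal, hlam.isIdeal hstar⟩
end

section
/- Let A be a left brace such that A³ = ⟨0⟩. Then (x·z) ⋆ y = x ⋆ y + z ⋆ y for all elements x, y, z ∈ A. -/
open LeftBrace

/-- If `A` is a left brace with `A³ = ⟨0⟩` (here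
`A³ = A ⋆ (A ⋆ A) = leftSeriesN A 2`), then `(x·z) ⋆ y = x ⋆ y + z ⋆ y`
for all `x y z ∈ A`. -/
theorem mul_star_eq_add {A : Type*} [LeftBrace A]
    (h3 : leftSeriesN A 2 = ⊥) (x y z : A) :
    star (x * z) y = star x y + star z y := by
  -- key algebraic identity: (x*z) ⋆ y = x ⋆ (z ⋆ y) + x ⋆ y + z ⋆ y
  have hzy : z * y = star z y + z + y := by simp [LeftBrace.star]; abel
  have hm : (x * z) * y = x * (star z y) + x * z + x * y - x - x := by
    rw [mul_assoc, hzy, LeftBrace.mul_add_eq, LeftBrace.mul_add_eq]; abel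
  have key : star (x * z) y = star x (star z y) + star x y + star z y := by
    simp only [LeftBrace.star, hm]
    abel
  -- star x (star z y) lies in A³ = ⊥
  have h1 : star z y ∈ ((leftSeriesN A 1 : AddSubgroup A) : Set A) := by
    show star z y ∈ setStar Set.univ _
    exact AddSubgroup.subset_closure ⟨z, Set.mem_univ z, y, by simp [leftSeriesN], rfl⟩
  have h2 : star x (star z y) ∈ leftSeriesN A 2 := by
    show star x (star z y) ∈ setStar Set.univ _
    exact AddSubgroup.subset_closure ⟨x, Set.mem_univ x, star z y, h1, rfl⟩
  rw [h3, AddSubgroup.mem_bot] at h2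
  rw [key, h2, zero_add]
end

section
/- Let A be a left brace such that A³ = ⟨0⟩. Then gⁿ ⋆ z = n·(g ⋆ z) for every integer n and all elements g, z ∈ A, where gⁿ denotes the n-th power of g in the multiplicative group of A and n·(g ⋆ z) denotes the n-th additive multiple. -/
open LeftBrace

/-! Since `b ↦ a * b - a` is additive, associativity gives
`(a * b) ⋆ z = a ⋆ (b ⋆ z) + a ⋆ z + b ⋆ z`. When `A³ = 0` the first summand vanishes, so
`g ↦ g ⋆ z` is a homomorphism from the multiplicative group of `A` to its additive group, and
homomorphisms commute with integer powers. -/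

namespace LeftBrace

variable {A : Type*} [LeftBrace A]

theorem star_mul (a b z : A) : star (a * b) z = star a (star b z) + star a z + star b z := by
  have hbz : b * z = star b z + b + z := by
    simp only [star]
    abel
  rw [star, mul_assoc, hbz, mul_add_eq, mul_add_eq]
  simp only [star]
  abel

theorem star_mem_leftSeriesN_succ {n : ℕ} (a : A) {x : A} (hx : x ∈ leftSeriesN A n) :
    star a x ∈ leftSeriesN A (n + 1) :=
  AddSubgroup.subset_closure (Set.mem_image2_of_mem (Set.mem_univ a) hx)

theorem star_star_eq_zero (h3 : leftSeriesN A 2 = ⊥) (a b x : A) : star a (star b x) = 0 := by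
  have hmem : star a (star b x) ∈ leftSeriesN A 2 :=
    star_mem_leftSeriesN_succ a (star_mem_leftSeriesN_succ b (AddSubgroup.mem_top x))
  rwa [h3, AddSubgroup.mem_bot] at hmem

theorem star_mul_of_leftSeriesN_two_eq_bot (h3 : leftSeriesN A 2 = ⊥) (a b z : A) :
    star (a * b) z = star a z + star b z := by
  rw [star_mul, star_star_eq_zero h3, zero_add]

def starLeftHom (h3 : leftSeriesN A 2 = ⊥) (z : A) : A →* Multiplicative A :=
  MonoidHom.mk' (fun g => Multiplicative.ofAdd (star g z)) fun a b => by
    rw [star_mul_of_leftSeriesN_two_eq_bot h3, ofAdd_add]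

end LeftBrace

/-- If `A` is a left brace with `A³ = ⟨0⟩` (here
`A³ = A ⋆ (A ⋆ A) = leftSeriesN A 2`), then `gⁿ ⋆ z = n·(g ⋆ z)` for every
integer `n` and all `g z ∈ A`. -/
theorem zpow_star {A : Type*} [LeftBrace A]
    (h3 : leftSeriesN A 2 = ⊥) (n : ℤ) (g z : A) :
    star (g ^ n) z = n • star g z :=
  congrArg Multiplicative.toAdd (map_zpow (starLeftHom h3 z) g n)
end

section
/- Let A be a left brace such that A³ = ⟨0⟩, and let a ∈ A. Then a ⋆ a⁻¹ = a⁻¹ ⋆ a = −(a ⋆ a), a⁻¹ ⋆ a⁻¹ = a ⋆ a, and a⁻¹ = (a ⋆ a) − a, where a⁻¹ is the multiplicative inverse of a. -/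
open LeftBrace

/-- If `A` is a left brace with `A³ = ⟨0⟩` (here
`A³ = A ⋆ (A ⋆ A) = leftSeriesN A 2`) and `a ∈ A`, then
`a ⋆ a⁻¹ = a⁻¹ ⋆ a = −(a ⋆ a)`, `a⁻¹ ⋆ a⁻¹ = a ⋆ a`, and `a⁻¹ = (a ⋆ a) − a`. -/
theorem brace_star_inv {A : Type*} [LeftBrace A]
    (h3 : leftSeriesN A 2 = ⊥) (a : A) :
    star a a⁻¹ = -star a a ∧ star a⁻¹ a = -star a a ∧
    star a⁻¹ a⁻¹ = star a a ∧ a⁻¹ = star a a - a := by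
  have mz : ∀ x : A, x * 0 = x := by
    intro x
    have h := LeftBrace.mul_add_eq x 0 0
    rw [add_zero, eq_sub_iff_add_eq] at h
    exact (add_left_cancel h).symm
  have oz : (1 : A) = 0 := by
    have h := mz 1
    rw [one_mul] at h
    exact h.symm
  have star0 : ∀ x y z : A, star x (star y z) = 0 := by
    intro x y z
    have hm : star y z ∈ leftSeriesN A 1 :=
      AddSubgroup.subset_closure ⟨y, trivial, z, trivial, rfl⟩
    have h2 : star x (star y z) ∈ leftSeriesN A 2 :=
      AddSubgroup.subset_closure ⟨x, trivial, star y z, hm, rfl⟩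
    rw [h3] at h2
    exact AddSubgroup.mem_bot.mp h2
  have key : ∀ x y z : A, x * star y z = x + star y z := by
    intro x y z
    have h : x * star y z - x - star y z = 0 := star0 x y z
    rw [sub_sub, sub_eq_zero] at h
    exact h
  have hmul : a * a⁻¹ = 0 := by rw [mul_inv_cancel, oz]
  have hmul' : a⁻¹ * a = 0 := by rw [inv_mul_cancel, oz]
  have hneg : a⁻¹ * (-a) = a⁻¹ + a⁻¹ := by
    have h := LeftBrace.mul_add_eq a⁻¹ a (-a)
    rw [add_neg_cancel, mz, hmul', zero_add, eq_sub_iff_add_eq] at h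
    exact h.symm
  have haa : a * a = star a a + (a + a) := by
    show a * a = (a * a - a - a) + (a + a)
    abel
  have hinv : a⁻¹ = star a a - a := by
    have h := LeftBrace.mul_add_eq a⁻¹ (star a a) (a + a)
    have h2 := LeftBrace.mul_add_eq a⁻¹ a a
    rw [hmul'] at h2
    rw [h2, key a⁻¹ a a] at h
    have hl : a⁻¹ * (star a a + (a + a)) = a := by
      rw [← haa, ← mul_assoc, inv_mul_cancel, one_mul]
    rw [hl] at h
    have h0 := sub_eq_zero.mpr h
    apply sub_eq_zero.mp
    rw [← h0]
    abel
  have c1 : star a a⁻¹ = -star a a := by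
    show a * a⁻¹ - a - a⁻¹ = -star a a
    rw [hmul, hinv]; abel
  have c2 : star a⁻¹ a = -star a a := by
    show a⁻¹ * a - a⁻¹ - a = -star a a
    rw [hmul', hinv]; abel
  have c3 : star a⁻¹ a⁻¹ = star a a := by
    have h := LeftBrace.mul_add_eq a⁻¹ (star a a) (-a)
    rw [key a⁻¹ a a, hneg] at h
    have he : a⁻¹ * a⁻¹ = a⁻¹ * (star a a + -a) := by
      rw [← sub_eq_add_neg, ← hinv]
    show a⁻¹ * a⁻¹ - a⁻¹ - a⁻¹ = star a a
    rw [he, h]; abel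
  exact ⟨c1, c2, c3, hinv⟩
end

section
/- Define on the set D = ℤ × ℤ the operations (k₁, k₂) + (t₁, t₂) = (k₁ + t₁, k₂ + t₂) and (k₁, k₂)·(t₁, t₂) = (k₁ + t₁, k₁t₁ + k₂ + t₂). Then D with these operations is a left brace, D is generated as a brace by one element, and D³ = ⟨0⟩ = D^{(3)}. -/
open LeftBrace

/-- The underlying set `D = ℤ × ℤ` (as a type synonym, so that the brace
multiplication below does not clash with the componentwise product). -/
def TwoBrace : Type := ℤ × ℤ

namespace TwoBrace

/-- The addition of `D` is componentwise: `(k₁,k₂)+(t₁,t₂) = (k₁+t₁, k₂+t₂)`. -/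
instance : AddCommGroup TwoBrace := inferInstanceAs (AddCommGroup (ℤ × ℤ))

/-- The multiplication of `D`: `(k₁,k₂)·(t₁,t₂) = (k₁+t₁, k₁t₁+k₂+t₂)`. -/
instance instGroup : Group TwoBrace where
  mul x y := ((x.1 + y.1, x.1 * y.1 + x.2 + y.2) : ℤ × ℤ)
  one := ((0, 0) : ℤ × ℤ)
  inv x := ((-x.1, x.1 ^ 2 - x.2) : ℤ × ℤ)
  mul_assoc a b c := show
      ((a.1 + b.1 + c.1, (a.1 + b.1) * c.1 + (a.1 * b.1 + a.2 + b.2) + c.2) : ℤ × ℤ)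
      = (a.1 + (b.1 + c.1), a.1 * (b.1 + c.1) + a.2 + (b.1 * c.1 + b.2 + c.2)) by
    refine Prod.ext ?_ ?_ <;> dsimp <;> ring
  one_mul a := show ((0 + a.1, 0 * a.1 + 0 + a.2) : ℤ × ℤ) = (a.1, a.2) by
    refine Prod.ext ?_ ?_ <;> dsimp <;> ring
  mul_one a := show ((a.1 + 0, a.1 * 0 + a.2 + 0) : ℤ × ℤ) = (a.1, a.2) by
    refine Prod.ext ?_ ?_ <;> dsimp <;> ring
  inv_mul_cancel a := show
      ((-a.1 + a.1, -a.1 * a.1 + (a.1 ^ 2 - a.2) + a.2) : ℤ × ℤ) = ((0, 0) : ℤ × ℤ) by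
    refine Prod.ext ?_ ?_ <;> dsimp <;> ring

/-- `D` with these two operations is a left brace. -/
instance instLeftBrace : LeftBrace TwoBrace :=
  { (inferInstance : AddCommGroup TwoBrace), (inferInstance : Group TwoBrace) with
    mul_add_eq := fun a b c => show
        ((a.1 + (b.1 + c.1), a.1 * (b.1 + c.1) + a.2 + (b.2 + c.2)) : ℤ × ℤ)
        = ((a.1 + b.1) + (a.1 + c.1) - a.1,
            (a.1 * b.1 + a.2 + b.2) + (a.1 * c.1 + a.2 + c.2) - a.2) by
      refine Prod.ext ?_ ?_ <;> dsimp <;> ring }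

end TwoBrace

/-! In `D` one has `a ⋆ b = (0, a₁b₁)`. Hence `D` is generated by `d = (1, 0)`: a subbrace is
closed under `+`, `-` and `⋆`, and the additive group is spanned by `d` and `d ⋆ d = (0, 1)`.
For the series, every element of `D ⋆ D` has first coordinate `0`, and any `⋆`-product with
such an element vanishes. -/

namespace LeftBrace

variable {A : Type*} [LeftBrace A]

theorem setStar_le_iff {K L : Set A} {H : AddSubgroup A} :
    setStar K L ≤ H ↔ ∀ x ∈ K, ∀ y ∈ L, star x y ∈ H :=
  (AddSubgroup.closure_le H).trans Set.image2_subset_iff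

theorem setStar_eq_bot_iff {K L : Set A} :
    setStar K L = ⊥ ↔ ∀ x ∈ K, ∀ y ∈ L, star x y = 0 := by
  simp only [← le_bot_iff, setStar_le_iff, AddSubgroup.mem_bot]

namespace IsSubbrace

variable {S : Set A}

def toAddSubgroup (hS : IsSubbrace S) : AddSubgroup A where
  carrier := S
  zero_mem' := hS.1
  add_mem' hx hy := hS.2.1 _ hx _ hy
  neg_mem' hx := hS.2.2.1 _ hx

theorem mem_toAddSubgroup (hS : IsSubbrace S) {x : A} : x ∈ hS.toAddSubgroup ↔ x ∈ S :=
  Iff.rfl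

theorem star_mem (hS : IsSubbrace S) {x y : A} (hx : x ∈ S) (hy : y ∈ S) : star x y ∈ S :=
  hS.toAddSubgroup.sub_mem (hS.toAddSubgroup.sub_mem (hS.2.2.2.2.1 x hx y hy) hx) hy

theorem eq_univ_of_closure_eq_top (hS : IsSubbrace S) {d : A} (hd : d ∈ S)
    (htop : AddSubgroup.closure {d, star d d} = ⊤) : S = Set.univ := by
  have hle : AddSubgroup.closure {d, star d d} ≤ hS.toAddSubgroup :=
    (AddSubgroup.closure_le _).2 (Set.pair_subset hd (hS.star_mem hd hd))
  exact Set.eq_univ_of_forall fun x =>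
    hS.mem_toAddSubgroup.1 (hle (htop ▸ AddSubgroup.mem_top x))

end IsSubbrace

end LeftBrace

open LeftBrace

namespace TwoBrace

theorem star_eq (a b : TwoBrace) : star a b = ((0, a.1 * b.1) : ℤ × ℤ) :=
  Prod.ext (show a.1 + b.1 - a.1 - b.1 = 0 by ring)
    (show a.1 * b.1 + a.2 + b.2 - a.2 - b.2 = a.1 * b.1 by ring)

theorem star_eq_zero_of_fst_eq_zero_left {a : TwoBrace} (ha : a.1 = 0) (b : TwoBrace) :
    star a b = 0 := by
  rw [star_eq, ha, zero_mul]
  rfl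

theorem star_eq_zero_of_fst_eq_zero_right (a : TwoBrace) {b : TwoBrace} (hb : b.1 = 0) :
    star a b = 0 := by
  rw [star_eq, hb, mul_zero]
  rfl

def fstHom : TwoBrace →+ ℤ := AddMonoidHom.fst ℤ ℤ

theorem fst_eq_zero_of_mem_setStar {K L : Set TwoBrace} {x : TwoBrace} (hx : x ∈ setStar K L) :
    x.1 = 0 := by
  have hle : setStar K L ≤ fstHom.ker :=
    setStar_le_iff.2 fun a _ b _ => by rw [AddMonoidHom.mem_ker, star_eq]; rfl
  exact hle hx

def generator : TwoBrace := ((1, 0) : ℤ × ℤ)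

theorem eq_zsmul_generator_add_zsmul_star (x : TwoBrace) :
    x = x.1 • generator + x.2 • star generator generator := by
  rw [star_eq]
  exact Prod.ext (show x.1 = x.1 * 1 + x.2 * 0 by ring)
    (show x.2 = x.1 * 0 + x.2 * (1 * 1) by ring)

theorem closure_generator_star_eq_top :
    AddSubgroup.closure {generator, star generator generator} = ⊤ := by
  refine eq_top_iff.2 fun x _ => ?_
  rw [eq_zsmul_generator_add_zsmul_star x]
  exact add_mem (zsmul_mem (AddSubgroup.subset_closure (by simp)) _)
    (zsmul_mem (AddSubgroup.subset_closure (by simp)) _)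

end TwoBrace

/-- **Theorem B1, first part.** `D = ℤ × ℤ` with the operations
`(k₁,k₂)+(t₁,t₂) = (k₁+t₁, k₂+t₂)` and `(k₁,k₂)·(t₁,t₂) = (k₁+t₁, k₁t₁+k₂+t₂)`
is a left brace (witnessed by the instance `TwoBrace.instLeftBrace` above, whose
operations are recorded in the first two conjuncts), `D` is generated as a brace
by one element, and `D³ = ⟨0⟩ = D⁽³⁾` (here `D³ = leftSeriesN TwoBrace 2` and
`D⁽³⁾ = rightSeriesN TwoBrace 2`). -/
theorem twoBrace_structure :
    (∀ x y : TwoBrace, x + y = ((x.1 + y.1, x.2 + y.2) : ℤ × ℤ)) ∧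
    (∀ x y : TwoBrace, x * y = ((x.1 + y.1, x.1 * y.1 + x.2 + y.2) : ℤ × ℤ)) ∧
    (∃ d : TwoBrace, ∀ S : Set TwoBrace, IsSubbrace S → d ∈ S → S = Set.univ) ∧
    leftSeriesN TwoBrace 2 = ⊥ ∧ rightSeriesN TwoBrace 2 = ⊥ := by
  refine ⟨fun _ _ => rfl, fun _ _ => rfl, ?_, ?_, ?_⟩
  · exact ⟨TwoBrace.generator, fun S hS hd =>
      hS.eq_univ_of_closure_eq_top hd TwoBrace.closure_generator_star_eq_top⟩
  · exact setStar_eq_bot_iff.2 fun a _ _ hb =>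
      TwoBrace.star_eq_zero_of_fst_eq_zero_right a (TwoBrace.fst_eq_zero_of_mem_setStar hb)
  · exact setStar_eq_bot_iff.2 fun _ ha b _ =>
      TwoBrace.star_eq_zero_of_fst_eq_zero_left (TwoBrace.fst_eq_zero_of_mem_setStar ha) b
end

section
/- Define on the set D = ℤ × ℤ × ℤ the operations (k₁, k₂, k₃) + (t₁, t₂, t₃) = (k₁ + t₁, k₂ + t₂, k₃ + t₃) and (k₁, k₂, k₃)·(t₁, t₂, t₃) = (k₁ + t₁, k₁t₁ + k₂ + t₂, k₃ + t₃ + ((2k₂ + k₁ − k₁²)/2)·t₁), where (k₁ − k₁²)/2 is an integer. Then D with these operations is a left brace, D is generated as a brace by one element, and D³ = ⟨0⟩ = D^{(4)} with D^{(3)} ≠ ⟨0⟩. -/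
open LeftBrace

def ThreeBrace : Type := ℤ × ℤ × ℤ

namespace ThreeBrace

/-- `2·k₂ + k₁ − k₁²` is always even, so its integer division by `2` is exact. -/
private lemma key (k₁ k₂ : ℤ) :
    2 * ((2 * k₂ + k₁ - k₁ ^ 2) / 2) = 2 * k₂ + k₁ - k₁ ^ 2 := by
  obtain ⟨c, hc⟩ := Int.even_mul_succ_self (k₁ - 1)
  have h : 2 * k₂ + k₁ - k₁ ^ 2 = 2 * (k₂ - c) := by linear_combination -hc
  rw [h]; omega

private lemma key0 (k₁ : ℤ) : 2 * ((k₁ - k₁ ^ 2) / 2) = k₁ - k₁ ^ 2 := by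
  have h := key k₁ 0
  norm_num at h
  exact h

instance : AddCommGroup ThreeBrace := inferInstanceAs (AddCommGroup (ℤ × ℤ × ℤ))

instance instGroup : Group ThreeBrace where
  mul x y := ((x.1 + y.1, x.1 * y.1 + x.2.1 + y.2.1,
      x.2.2 + y.2.2 + ((2 * x.2.1 + x.1 - x.1 ^ 2) / 2) * y.1) : ℤ × ℤ × ℤ)
  one := ((0, 0, 0) : ℤ × ℤ × ℤ)
  inv x := ((-x.1, x.1 ^ 2 - x.2.1,
      x.1 * x.2.1 + ((x.1 - x.1 ^ 2) / 2) * x.1 - x.2.2) : ℤ × ℤ × ℤ)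
  mul_assoc a b c := by
    show ((a.1 + b.1 + c.1,
        (a.1 + b.1) * c.1 + (a.1 * b.1 + a.2.1 + b.2.1) + c.2.1,
        (a.2.2 + b.2.2 + ((2 * a.2.1 + a.1 - a.1 ^ 2) / 2) * b.1) + c.2.2 +
          ((2 * (a.1 * b.1 + a.2.1 + b.2.1) + (a.1 + b.1) - (a.1 + b.1) ^ 2) / 2) * c.1) : ℤ × ℤ × ℤ)
      = (a.1 + (b.1 + c.1),
        a.1 * (b.1 + c.1) + a.2.1 + (b.1 * c.1 + b.2.1 + c.2.1),
        a.2.2 + (b.2.2 + c.2.2 + ((2 * b.2.1 + b.1 - b.1 ^ 2) / 2) * c.1) +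
          ((2 * a.2.1 + a.1 - a.1 ^ 2) / 2) * (b.1 + c.1))
    refine Prod.ext (by dsimp; ring) (Prod.ext (by dsimp; ring) ?_)
    dsimp
    have h1 := key (a.1 + b.1) (a.1 * b.1 + a.2.1 + b.2.1)
    have h2 := key a.1 a.2.1
    have h3 := key b.1 b.2.1
    have h : 2 * ((a.2.2 + b.2.2 + ((2 * a.2.1 + a.1 - a.1 ^ 2) / 2) * b.1) + c.2.2 +
          ((2 * (a.1 * b.1 + a.2.1 + b.2.1) + (a.1 + b.1) - (a.1 + b.1) ^ 2) / 2) * c.1)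
        = 2 * (a.2.2 + (b.2.2 + c.2.2 + ((2 * b.2.1 + b.1 - b.1 ^ 2) / 2) * c.1) +
          ((2 * a.2.1 + a.1 - a.1 ^ 2) / 2) * (b.1 + c.1)) := by
      linear_combination c.1 * h1 - c.1 * h2 - c.1 * h3
    linarith
  one_mul a := by
    show ((0 + a.1, 0 * a.1 + 0 + a.2.1,
        0 + a.2.2 + ((2 * 0 + 0 - 0 ^ 2) / 2) * a.1) : ℤ × ℤ × ℤ) = (a.1, a.2.1, a.2.2)
    refine Prod.ext (by dsimp; ring) (Prod.ext (by dsimp; ring) ?_)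
    dsimp; norm_num
  mul_one a := by
    show ((a.1 + 0, a.1 * 0 + a.2.1 + 0,
        a.2.2 + 0 + ((2 * a.2.1 + a.1 - a.1 ^ 2) / 2) * 0) : ℤ × ℤ × ℤ) = (a.1, a.2.1, a.2.2)
    refine Prod.ext (by dsimp; ring) (Prod.ext (by dsimp; ring) ?_)
    dsimp; ring
  inv_mul_cancel a := by
    show ((-a.1 + a.1, -a.1 * a.1 + (a.1 ^ 2 - a.2.1) + a.2.1,
        (a.1 * a.2.1 + ((a.1 - a.1 ^ 2) / 2) * a.1 - a.2.2) + a.2.2 +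
          ((2 * (a.1 ^ 2 - a.2.1) + -a.1 - (-a.1) ^ 2) / 2) * a.1) : ℤ × ℤ × ℤ)
      = ((0, 0, 0) : ℤ × ℤ × ℤ)
    refine Prod.ext (by dsimp; ring) (Prod.ext (by dsimp; ring) ?_)
    dsimp
    have h4 := key (-a.1) (a.1 ^ 2 - a.2.1)
    have h5 := key0 a.1
    have h : 2 * ((a.1 * a.2.1 + ((a.1 - a.1 ^ 2) / 2) * a.1 - a.2.2) + a.2.2 +
          ((2 * (a.1 ^ 2 - a.2.1) + -a.1 - (-a.1) ^ 2) / 2) * a.1) = 2 * 0 := by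
      linear_combination a.1 * h5 + a.1 * h4
    linarith

instance instLeftBrace : LeftBrace ThreeBrace :=
  { (inferInstanceAs (AddCommGroup ThreeBrace) : AddCommGroup ThreeBrace),
    (inferInstanceAs (Group ThreeBrace) : Group ThreeBrace) with
    mul_add_eq := fun a b c => by
      show ((a.1 + (b.1 + c.1), a.1 * (b.1 + c.1) + a.2.1 + (b.2.1 + c.2.1),
          a.2.2 + (b.2.2 + c.2.2) + ((2 * a.2.1 + a.1 - a.1 ^ 2) / 2) * (b.1 + c.1)) : ℤ × ℤ × ℤ)
        = ((a.1 + b.1) + (a.1 + c.1) - a.1,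
            (a.1 * b.1 + a.2.1 + b.2.1) + (a.1 * c.1 + a.2.1 + c.2.1) - a.2.1,
            (a.2.2 + b.2.2 + ((2 * a.2.1 + a.1 - a.1 ^ 2) / 2) * b.1) +
              (a.2.2 + c.2.2 + ((2 * a.2.1 + a.1 - a.1 ^ 2) / 2) * c.1) - a.2.2)
      refine Prod.ext (by dsimp; ring) (Prod.ext (by dsimp; ring) (by dsimp; ring)) }

end ThreeBrace

/-! In coordinates `x ⋆ y = (0, x₁y₁, ((2x₂ + x₁ - x₁²)/2)·y₁)`. Hence every star lies in
`{x₁ = 0}`, which `⋆` annihilates from the right, and a star whose left factor lies in `{x₁ = 0}`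
lies in `{x₁ = x₂ = 0}`, which `⋆` annihilates from the left; this gives `D³ = 0 = D⁽⁴⁾`.
For `d = (1, 0, 0)` one gets `d ⋆ d = (0, 1, 0)` and `(d ⋆ d) ⋆ d = (0, 0, 1)`, so any subbrace
containing `d` contains an additive basis of `ℤ³`, and `D⁽³⁾` contains `(0, 0, 1)`. -/

namespace LeftBrace

variable {A : Type*} [LeftBrace A]

def IsSubbrace.toAddSubgroup_s19 {S : Set A} (hS : IsSubbrace S) : AddSubgroup A where
  carrier := S
  zero_mem' := hS.1
  add_mem' := fun ha hb => hS.2.1 _ ha _ hb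
  neg_mem' := hS.2.2.1 _

@[simp]
theorem IsSubbrace.mem_toAddSubgroup_s19 {S : Set A} (hS : IsSubbrace S) {x : A} :
    x ∈ hS.toAddSubgroup_s19 ↔ x ∈ S :=
  Iff.rfl

theorem IsSubbrace.star_mem_s19 {S : Set A} (hS : IsSubbrace S) {x y : A} (hx : x ∈ S)
    (hy : y ∈ S) : star x y ∈ S :=
  hS.mem_toAddSubgroup_s19.1 <| sub_mem (sub_mem (hS.mem_toAddSubgroup_s19.2 (hS.2.2.2.2.1 x hx y hy))
    (hS.mem_toAddSubgroup_s19.2 hx)) (hS.mem_toAddSubgroup_s19.2 hy)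

end LeftBrace

namespace ThreeBrace

theorem ext {x y : ThreeBrace} (h₁ : x.1 = y.1) (h₂ : x.2.1 = y.2.1) (h₃ : x.2.2 = y.2.2) :
    x = y :=
  Prod.ext h₁ (Prod.ext h₂ h₃)

@[simp] theorem zero_fst : (0 : ThreeBrace).1 = 0 := rfl
@[simp] theorem zero_snd : (0 : ThreeBrace).2.1 = 0 := rfl
@[simp] theorem zero_thd : (0 : ThreeBrace).2.2 = 0 := rfl

@[simp] theorem star_fst (x y : ThreeBrace) : (star x y).1 = 0 :=
  show x.1 + y.1 - x.1 - y.1 = 0 by ring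

@[simp] theorem star_snd (x y : ThreeBrace) : (star x y).2.1 = x.1 * y.1 :=
  show x.1 * y.1 + x.2.1 + y.2.1 - x.2.1 - y.2.1 = x.1 * y.1 by ring

@[simp] theorem star_thd (x y : ThreeBrace) :
    (star x y).2.2 = (2 * x.2.1 + x.1 - x.1 ^ 2) / 2 * y.1 :=
  show x.2.2 + y.2.2 + (2 * x.2.1 + x.1 - x.1 ^ 2) / 2 * y.1 - x.2.2 - y.2.2 = _ by ring

theorem star_eq_zero_of_fst_eq_zero (x : ThreeBrace) {y : ThreeBrace} (hy : y.1 = 0) :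
    star x y = 0 :=
  ext (by simp) (by simp [hy]) (by simp [hy])

theorem star_eq_zero_of_fst_snd_eq_zero {x : ThreeBrace} (hx₁ : x.1 = 0) (hx₂ : x.2.1 = 0)
    (y : ThreeBrace) : star x y = 0 :=
  ext (by simp) (by simp [hx₁]) (by simp [hx₁, hx₂])

def fstHom : ThreeBrace →+ ℤ := AddMonoidHom.fst ℤ (ℤ × ℤ)

def sndHom : ThreeBrace →+ ℤ := (AddMonoidHom.fst ℤ ℤ).comp (AddMonoidHom.snd ℤ (ℤ × ℤ))

theorem mem_ker_fstHom {x : ThreeBrace} : x ∈ fstHom.ker ↔ x.1 = 0 := Iff.rfl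

theorem mem_ker_sndHom {x : ThreeBrace} : x ∈ sndHom.ker ↔ x.2.1 = 0 := Iff.rfl

theorem setStar_le_ker_fstHom (K L : Set ThreeBrace) : setStar K L ≤ fstHom.ker :=
  setStar_le_iff.2 fun x _ y _ => star_fst x y

theorem setStar_le_ker_fstHom_inf_ker_sndHom {K : Set ThreeBrace}
    (hK : K ⊆ fstHom.ker) (L : Set ThreeBrace) :
    setStar K L ≤ fstHom.ker ⊓ sndHom.ker :=
  setStar_le_iff.2 fun x hx y _ =>
    ⟨star_fst x y, mem_ker_sndHom.2 (by rw [star_snd, mem_ker_fstHom.1 (hK hx), zero_mul])⟩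

def gen : ThreeBrace := ((1, 0, 0) : ℤ × ℤ × ℤ)

theorem star_gen_gen : star gen gen = ((0, 1, 0) : ℤ × ℤ × ℤ) :=
  ext (star_fst _ _) (by rw [star_snd]; rfl) (by rw [star_thd]; rfl)

theorem star_star_gen_gen_gen : star (star gen gen) gen = ((0, 0, 1) : ℤ × ℤ × ℤ) :=
  ext (star_fst _ _) (by rw [star_snd]; rfl) (by rw [star_thd, star_gen_gen]; rfl)

theorem eq_zsmul_gen_add (p : ThreeBrace) :
    p = p.1 • gen + p.2.1 • star gen gen + p.2.2 • star (star gen gen) gen := by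
  rw [star_star_gen_gen_gen, star_gen_gen]
  exact ext (show p.1 = p.1 * 1 + p.2.1 * 0 + p.2.2 * 0 by ring)
    (show p.2.1 = p.1 * 0 + p.2.1 * 1 + p.2.2 * 0 by ring)
    (show p.2.2 = p.1 * 0 + p.2.1 * 0 + p.2.2 * 1 by ring)

theorem eq_univ_of_isSubbrace_of_gen_mem {S : Set ThreeBrace} (hS : IsSubbrace S)
    (hgen : gen ∈ S) : S = Set.univ := by
  have h₂ := hS.star_mem_s19 hgen hgen
  have h₃ := hS.star_mem_s19 h₂ hgen
  refine Set.eq_univ_of_forall fun p => hS.mem_toAddSubgroup_s19.1 ?_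
  rw [← hS.mem_toAddSubgroup_s19] at hgen h₂ h₃
  rw [eq_zsmul_gen_add p]
  exact add_mem (add_mem (zsmul_mem hgen _) (zsmul_mem h₂ _)) (zsmul_mem h₃ _)

theorem star_star_gen_gen_gen_mem_rightSeriesN_two :
    star (star gen gen) gen ∈ rightSeriesN ThreeBrace 2 :=
  star_mem_setStar (star_mem_setStar (Set.mem_univ gen) (Set.mem_univ gen)) (Set.mem_univ gen)

theorem star_star_gen_gen_gen_ne_zero : star (star gen gen) gen ≠ 0 := by
  rw [star_star_gen_gen_gen]
  exact fun h => one_ne_zero (α := ℤ) (congrArg (fun p : ℤ × ℤ × ℤ => p.2.2) h)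

theorem leftSeriesN_two_eq_bot : leftSeriesN ThreeBrace 2 = ⊥ := by
  have hleft₁ : leftSeriesN ThreeBrace 1 ≤ fstHom.ker := setStar_le_ker_fstHom _ _
  refine eq_bot_iff.2 (setStar_le_iff.2 fun x _ y hy => ?_)
  rw [star_eq_zero_of_fst_eq_zero x (hleft₁ hy)]
  exact zero_mem _

theorem rightSeriesN_three_eq_bot : rightSeriesN ThreeBrace 3 = ⊥ := by
  have hright₂ : rightSeriesN ThreeBrace 2 ≤ fstHom.ker ⊓ sndHom.ker :=
    setStar_le_ker_fstHom_inf_ker_sndHom (setStar_le_ker_fstHom _ _) _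
  refine eq_bot_iff.2 (setStar_le_iff.2 fun x hx y _ => ?_)
  rw [star_eq_zero_of_fst_snd_eq_zero (hright₂ hx).1 (hright₂ hx).2 y]
  exact zero_mem _

theorem rightSeriesN_two_ne_bot : rightSeriesN ThreeBrace 2 ≠ ⊥ := fun h => by
  have hmem := star_star_gen_gen_gen_mem_rightSeriesN_two
  rw [h, AddSubgroup.mem_bot] at hmem
  exact star_star_gen_gen_gen_ne_zero hmem

end ThreeBrace

/-- **Theorem B2, first part.** `D = ℤ × ℤ × ℤ` with the
operations `(k₁,k₂,k₃)+(t₁,t₂,t₃) = (k₁+t₁, k₂+t₂, k₃+t₃)` and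
`(k₁,k₂,k₃)·(t₁,t₂,t₃) = (k₁+t₁, k₁t₁+k₂+t₂, k₃+t₃+((2k₂+k₁−k₁²)/2)·t₁)`
(the integer division is exact since `2k₂ + k₁ − k₁²` is even) is a left brace
(witnessed by the instance `ThreeBrace.instLeftBrace` above, whose operations
are recorded in the first two conjuncts), `D` is generated as a brace by one
element, and `D³ = ⟨0⟩ = D⁽⁴⁾` with `D⁽³⁾ ≠ ⟨0⟩` (here
`D³ = leftSeriesN ThreeBrace 2`, `D⁽⁴⁾ = rightSeriesN ThreeBrace 3` and
`D⁽³⁾ = rightSeriesN ThreeBrace 2`). -/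
theorem threeBrace_structure :
    (∀ x y : ThreeBrace,
      x + y = ((x.1 + y.1, x.2.1 + y.2.1, x.2.2 + y.2.2) : ℤ × ℤ × ℤ)) ∧
    (∀ x y : ThreeBrace,
      x * y = ((x.1 + y.1, x.1 * y.1 + x.2.1 + y.2.1,
        x.2.2 + y.2.2 + ((2 * x.2.1 + x.1 - x.1 ^ 2) / 2) * y.1) : ℤ × ℤ × ℤ)) ∧
    (∃ d : ThreeBrace, ∀ S : Set ThreeBrace, IsSubbrace S → d ∈ S → S = Set.univ) ∧
    leftSeriesN ThreeBrace 2 = ⊥ ∧ rightSeriesN ThreeBrace 3 = ⊥ ∧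
    rightSeriesN ThreeBrace 2 ≠ ⊥ :=
  ⟨fun _ _ => rfl, fun _ _ => rfl,
    ⟨ThreeBrace.gen, fun _ => ThreeBrace.eq_univ_of_isSubbrace_of_gen_mem⟩,
    ThreeBrace.leftSeriesN_two_eq_bot, ThreeBrace.rightSeriesN_three_eq_bot,
    ThreeBrace.rightSeriesN_two_ne_bot⟩
end
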